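/- arXiv:2207.00373 — 7 statements merged into one kernel-verified Lean document; each statement's English description precedes it below -/
import Mathlib

section
/- Consider linear dynamics f(x,u) = Ax + Bu with A ∈ ℝ^{n×n}, B ∈ ℝ^{n×m} and constraint set Y = {(x,u) ∈ ℝⁿ × ℝᵐ : g(x,u) ≤ 0 componentwise} for a convex function g : ℝⁿ × ℝᵐ → ℝᵖ. Let ℓ : ℝⁿ × ℝᵐ → ℝ be a stage cost and assume there is a strictly convex function ℓ̂ with ℓ̂ ≤ ℓ on Y and ℓ̂(xᵉ,uᵉ) = ℓ(xᵉ,uᵉ), where (xᵉ,uᵉ) ∈ Y is the strictly globally optimal equilibrium of ℓ̂ (i.e. the global minimum of min_{(x,u)∈Y} ℓ̂(x,u) subject to x − Ax − Bu = 0, with ℓ̂(xᵉ,uᵉ) < ℓ̂(x,u) for every equilibrium (x,u) ∈ Y with x ≠ xᵉ). Assume further the Slater condition: there exists (x̂,û) ∈ ℝⁿ × ℝᵐ with g(x̂,û) < 0 componentwise and x̂ − Ax̂ − Bû = 0. Then there exists ν ∈ ℝⁿ such that the system is strictly pre-dissipative for the stage cost ℓ at (xᵉ,uᵉ) with the linear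 storage function λ(x) = νᵀx. -/
/-!
Slater's condition yields a Lagrange multiplier `ν` for the equality constraint `x = A x + B u`:
separating the point `(0, ℓ̂(xᵉ, uᵉ))` from the image of the strict epigraph of `ℓ̂` under
`(x, u, t) ↦ (x - A x - B u, t)` gives `ℓ̂ z + νᵀ (x - f z) ≥ ℓ̂ (xᵉ, uᵉ)` on `Y`. The rotated cost
`G z = ℓ̂ z + νᵀ (x - f z)` is strictly convex, so `(xᵉ, uᵉ)` is its unique minimiser on `Y`.
Convexity along rays from `(xᵉ, uᵉ)` and compactness of spheres make `G - G (xᵉ, uᵉ)` grow at least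
linearly outside every ball; integrating the resulting monotone positive growth rate gives the
`K∞` bound. Finally `ℓ ≥ ℓ̂` with equality at `(xᵉ, uᵉ)` passes the inequality from `ℓ̂` to `ℓ`.
-/

open Set Bornology Matrix Filter

/-- `Vec n` is `ℝⁿ`. -/
abbrev Vec (n : ℕ) : Type := Fin n → ℝ

/-- A class `K∞` comparison function. -/
def KInf (α : ℝ → ℝ) : Prop :=
  ContinuousOn α (Ici 0) ∧ StrictMonoOn α (Ici 0) ∧ α 0 = 0 ∧
  (∀ r ∈ Ici (0 : ℝ), 0 ≤ α r) ∧ ∀ M : ℝ, ∃ r ∈ Ici (0 : ℝ), M < α r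

/-- The induced state constraint set `X = {x | ∃ u, (x,u) ∈ Y}`. -/
def stateSet {n m : ℕ} (Y : Set (Vec n × Vec m)) : Set (Vec n) := {x | ∃ u, (x, u) ∈ Y}

/-- `lam` is bounded on bounded subsets of `X`. -/
def BddOnBddSubsets {n : ℕ} (X : Set (Vec n)) (lam : Vec n → ℝ) : Prop :=
  ∀ S ⊆ X, IsBounded S → IsBounded (lam '' S)

/-- The strict dissipation inequality with supply rate `ℓ(x,u) - ℓ(xᵉ,uᵉ)`. -/
def DissIneq {n m : ℕ} (f : Vec n × Vec m → Vec n) (Y : Set (Vec n × Vec m))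
    (ℓ : Vec n × Vec m → ℝ) (xe : Vec n) (ue : Vec m) (lam : Vec n → ℝ) (α : ℝ → ℝ) : Prop :=
  ∀ z ∈ Y, f z ∈ stateSet Y →
    ℓ z - ℓ (xe, ue) + lam z.1 - lam (f z) ≥ α ‖z.1 - xe‖

/-- Strict pre-dissipativity with a given storage function and `K∞` bound. -/
def StrictPreDissipativeWith {n m : ℕ} (f : Vec n × Vec m → Vec n) (Y : Set (Vec n × Vec m))
    (ℓ : Vec n × Vec m → ℝ) (xe : Vec n) (ue : Vec m) (lam : Vec n → ℝ) (α : ℝ → ℝ) : Prop :=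
  (xe, ue) ∈ Y ∧ f (xe, ue) = xe ∧ BddOnBddSubsets (stateSet Y) lam ∧ KInf α ∧
    DissIneq f Y ℓ xe ue lam α

/-- Strict dissipativity with a given storage function and `K∞` bound. -/
def StrictDissipativeWith {n m : ℕ} (f : Vec n × Vec m → Vec n) (Y : Set (Vec n × Vec m))
    (ℓ : Vec n × Vec m → ℝ) (xe : Vec n) (ue : Vec m) (lam : Vec n → ℝ) (α : ℝ → ℝ) : Prop :=
  StrictPreDissipativeWith f Y ℓ xe ue lam α ∧ BddBelow (lam '' stateSet Y)

/-- Strict dissipativity at an equilibrium. -/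
def StrictDissipative {n m : ℕ} (f : Vec n × Vec m → Vec n) (Y : Set (Vec n × Vec m))
    (ℓ : Vec n × Vec m → ℝ) (xe : Vec n) (ue : Vec m) : Prop :=
  ∃ lam α, StrictDissipativeWith f Y ℓ xe ue lam α

section LagrangeMultiplier

variable {E F : Type*} [NormedAddCommGroup E] [NormedSpace ℝ E] [FiniteDimensional ℝ E]
  [NormedAddCommGroup F] [NormedSpace ℝ F]
  {L : E →ₗ[ℝ] F} {Y : Set E} {h : E → ℝ} {c : ℝ} {z₀ : E}

theorem exists_lagrange_multiplier_of_surjective [FiniteDimensional ℝ F]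
    (hL : Function.Surjective L) (hY : Convex ℝ Y) (hconv : ConvexOn ℝ Y h) (hcont : Continuous h)
    (hmin : ∀ z ∈ Y, L z = 0 → c ≤ h z) (hz₀ : z₀ ∈ interior Y) (hLz₀ : L z₀ = 0) :
    ∃ φ : Module.Dual ℝ F, ∀ z ∈ Y, c ≤ h z + φ (L z) := by
  set O : Set (E × ℝ) := {p | p.1 ∈ interior Y ∧ h p.1 < p.2}
  set T : E × ℝ →ₗ[ℝ] F × ℝ := L.prodMap LinearMap.id
  have hO : IsOpen O := (isOpen_interior.preimage continuous_fst).inter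
    (isOpen_lt (hcont.comp continuous_fst) continuous_snd)
  have hT : Function.Surjective T := fun p => by
    obtain ⟨z, hz⟩ := hL p.1
    exact ⟨(z, p.2), by simp [T, hz]⟩
  have hcO : (0, c) ∉ T '' O := by
    rintro ⟨⟨z, t⟩, ⟨hz, hzt⟩, hzc⟩
    simp only [T, LinearMap.prodMap_apply, LinearMap.id_coe, id_eq, Prod.mk.injEq] at hzc
    exact (hmin z (interior_subset hz) hzc.1).not_gt (hzc.2 ▸ hzt)
  obtain ⟨F₀, hF₀⟩ := geometric_hahn_banach_open_point
    ((hconv.subset interior_subset hY.interior).convex_strict_epigraph.linear_image T)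
    (T.isOpenMap_of_finiteDimensional hT O hO) hcO
  set ψ : F →ₗ[ℝ] ℝ := (F₀ : F × ℝ →L[ℝ] ℝ).toLinearMap ∘ₗ LinearMap.inl ℝ F ℝ
  set κ := F₀ (0, 1)
  have hsplit : ∀ y t, F₀ (y, t) = ψ y + t * κ := fun y t => by
    rw [show ((y, t) : F × ℝ) = (y, 0) + t • (0, 1) by simp, map_add, map_smul]
    rfl
  have hsep : ∀ z ∈ interior Y, ∀ t, h z < t → ψ (L z) + t * κ < c * κ := fun z hz t ht => by
    simpa [hsplit, T] using hF₀ _ ⟨(z, t), ⟨hz, ht⟩, rfl⟩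
  -- Slater's point makes the separating hyperplane non-vertical.
  have hκ : κ < 0 := by
    have := hsep z₀ hz₀ (max (h z₀) c + 1) (by linarith [le_max_left (h z₀) c])
    rw [hLz₀, map_zero, zero_add] at this
    nlinarith [le_max_right (h z₀) c]
  have hint : ∀ z ∈ interior Y, c ≤ h z + (κ⁻¹ • ψ) (L z) := by
    intro z hz
    suffices c - κ⁻¹ * ψ (L z) ≤ h z by
      rw [LinearMap.smul_apply, smul_eq_mul]
      linarith
    rw [show c - κ⁻¹ * ψ (L z) = (c * κ - ψ (L z)) / κ by field_simp [hκ.ne]]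
    exact le_of_forall_gt_imp_ge_of_dense fun t ht =>
      ((div_lt_iff_of_neg hκ).2 (by linarith [hsep z hz t ht])).le
  refine ⟨κ⁻¹ • ψ, fun z hz => closure_minimal hint
    (isClosed_le continuous_const (hcont.add (κ⁻¹ • ψ ∘ₗ L).continuous_of_finiteDimensional)) ?_⟩
  rw [hY.closure_interior_eq_closure_of_nonempty_interior ⟨z₀, hz₀⟩]
  exact subset_closure hz

theorem exists_lagrange_multiplier (hY : Convex ℝ Y) (hconv : ConvexOn ℝ Y h)
    (hcont : Continuous h) (hmin : ∀ z ∈ Y, L z = 0 → c ≤ h z) (hz₀ : z₀ ∈ interior Y)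
    (hLz₀ : L z₀ = 0) :
    ∃ φ : Module.Dual ℝ F, ∀ z ∈ Y, c ≤ h z + φ (L z) := by
  obtain ⟨φ, hφ⟩ := exists_lagrange_multiplier_of_surjective L.surjective_rangeRestrict hY
    hconv hcont (fun z hz hLz => hmin z hz (congrArg Subtype.val hLz)) hz₀ (Subtype.ext hLz₀)
  obtain ⟨Φ, hΦ⟩ := LinearMap.exists_extend φ
  exact ⟨Φ, fun z hz => by simpa [← hΦ] using hφ z hz⟩

end LagrangeMultiplier

theorem StrictConvexOn.lt_of_isMinOn {𝕜 E β : Type*} [Field 𝕜] [LinearOrder 𝕜]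
    [IsStrictOrderedRing 𝕜] [AddCommMonoid E] [SMul 𝕜 E] [AddCommMonoid β] [LinearOrder β]
    [IsOrderedAddMonoid β] [Module 𝕜 β] [PosSMulMono 𝕜 β] {s : Set E} {f : E → β} {x y : E}
    (hf : StrictConvexOn 𝕜 s f) (hmin : IsMinOn f s x) (hx : x ∈ s) (hy : y ∈ s)
    (hyx : y ≠ x) : f x < f y :=
  lt_of_not_ge fun hle => hyx (hf.eq_of_isMinOn (fun _ hz => hle.trans (hmin hz)) hmin hy hx)

theorem ConvexOn.exists_linear_growth {E : Type*} [NormedAddCommGroup E] [NormedSpace ℝ E]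
    [ProperSpace E] {Y : Set E} {G : E → ℝ} {z₀ : E} (hY : IsClosed Y) (hG : ConvexOn ℝ Y G)
    (hcont : ContinuousOn G Y) (hz₀ : z₀ ∈ Y) (hlt : ∀ z ∈ Y, z ≠ z₀ → G z₀ < G z)
    {ρ : ℝ} (hρ : 0 < ρ) :
    ∃ c > 0, ∀ z ∈ Y, ρ ≤ ‖z - z₀‖ → c * ‖z - z₀‖ ≤ G z - G z₀ := by
  obtain ⟨a, ha, haK⟩ := ((isCompact_sphere z₀ ρ).inter_left hY).exists_forall_le'
    (hcont.mono inter_subset_left) fun w hw => hlt w hw.1 (Metric.ne_of_mem_sphere hw.2 hρ.ne')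
  refine ⟨(a - G z₀) / ρ, div_pos (sub_pos.2 ha) hρ, fun z hz hzρ => ?_⟩
  have hs : 0 < ‖z - z₀‖ := hρ.trans_le hzρ
  set θ := ρ / ‖z - z₀‖
  have hθ0 : 0 ≤ θ := by positivity
  have hθ1 : θ ≤ 1 := (div_le_one hs).2 hzρ
  have hθs : θ * ‖z - z₀‖ = ρ := div_mul_cancel₀ _ hs.ne'
  -- The point of `[z₀, z]` on the sphere of radius `ρ` bounds the slope of `G` along that ray.
  have hw : (1 - θ) • z₀ + θ • z ∈ Y ∩ Metric.sphere z₀ ρ := by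
    refine ⟨hG.1 hz₀ hz (sub_nonneg.2 hθ1) hθ0 (by ring), ?_⟩
    rw [mem_sphere_iff_norm, show (1 - θ) • z₀ + θ • z - z₀ = θ • (z - z₀) by module,
      norm_smul, Real.norm_of_nonneg hθ0, hθs]
  have hGw : G ((1 - θ) • z₀ + θ • z) ≤ (1 - θ) * G z₀ + θ * G z :=
    hG.2 hz₀ hz (sub_nonneg.2 hθ1) hθ0 (by ring)
  have := haK _ hw
  rw [div_mul_eq_mul_div, div_le_iff₀ hρ, ← hθs]
  nlinarith

section

variable {q : ℝ → ℝ}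

theorem Monotone.integral_le_mul (hq : Monotone q) {r : ℝ} (hr : 0 ≤ r) :
    ∫ t in (0 : ℝ)..r, q t ≤ r * q r := by
  calc ∫ t in (0 : ℝ)..r, q t ≤ ∫ _ in (0 : ℝ)..r, q r :=
        intervalIntegral.integral_mono_on hr hq.intervalIntegrable intervalIntegrable_const
          fun t ht => hq ht.2
    _ = r * q r := by simp

theorem Monotone.mul_le_integral (hq : Monotone q) {a b : ℝ} (hab : a ≤ b) :
    (b - a) * q a ≤ ∫ t in a..b, q t := by
  calc (b - a) * q a = ∫ _ in a..b, q a := by simp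
    _ ≤ ∫ t in a..b, q t :=
        intervalIntegral.integral_mono_on hab intervalIntegrable_const hq.intervalIntegrable
          fun t ht => hq ht.1

theorem kInf_primitive_of_monotone (hq : Monotone q) (hpos : ∀ t, 0 < t → 0 < q t) :
    KInf fun r => ∫ t in (0 : ℝ)..r, q t := by
  have hint : ∀ a b, IntervalIntegrable q MeasureTheory.volume a b :=
    fun _ _ => hq.intervalIntegrable
  have hsub : ∀ a b, (∫ t in (0 : ℝ)..b, q t) - (∫ t in (0 : ℝ)..a, q t) = ∫ t in a..b, q t :=
    fun a b => intervalIntegral.integral_interval_sub_left (hint 0 b) (hint 0 a)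
  have hstrict : StrictMonoOn (fun r => ∫ t in (0 : ℝ)..r, q t) (Ici 0) := by
    intro a ha b _ hab
    show ∫ t in (0 : ℝ)..a, q t < ∫ t in (0 : ℝ)..b, q t
    have := intervalIntegral.intervalIntegral_pos_of_pos_on (hint a b)
      (fun t ht => hpos t (lt_of_le_of_lt ha ht.1)) hab
    linarith [hsub a b]
  refine ⟨(intervalIntegral.continuous_primitive hint 0).continuousOn, hstrict, by simp,
    fun r hr => ?_, fun M => ?_⟩
  · simpa using hstrict.monotoneOn self_mem_Ici hr hr
  · set r := 1 + (|M| + 1) / q 1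
    have hq1 := hpos 1 one_pos
    have hr1 : 1 ≤ r := le_add_of_nonneg_right (by positivity)
    have hlow := hq.mul_le_integral hr1
    have h1 := hstrict.monotoneOn self_mem_Ici (mem_Ici.2 zero_le_one) zero_le_one
    have hr : (r - 1) * q 1 = |M| + 1 := by simp only [r]; field_simp; ring
    refine ⟨r, mem_Ici.2 (by linarith), show M < ∫ t in (0 : ℝ)..r, q t from ?_⟩
    simp only [intervalIntegral.integral_same] at h1
    linarith [hsub 1 r, le_abs_self M]

end

theorem exists_kInf_le_of_linear_growth {ι : Type*} {s : Set ι} {d G : ι → ℝ}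
    (hd : ∀ i, 0 ≤ d i) (hG : ∀ i ∈ s, 0 ≤ G i)
    (hgrowth : ∀ ρ > 0, ∃ c > 0, ∀ i ∈ s, ρ ≤ d i → c * d i ≤ G i) :
    ∃ α, KInf α ∧ ∀ i ∈ s, α (d i) ≤ G i := by
  -- `1` is inserted so that the infimum is over a nonempty set: `sInf ∅ = 0` breaks monotonicity.
  set S : ℝ → Set ℝ := fun t => insert 1 ((fun i => G i / d i) '' {i | i ∈ s ∧ t ≤ d i})
  have hbdd : ∀ t, BddBelow (S t) := by
    rintro t
    refine ⟨0, ?_⟩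
    rintro _ (rfl | ⟨i, ⟨hi, -⟩, rfl⟩)
    exacts [zero_le_one, div_nonneg (hG i hi) (hd i)]
  have hmono : Monotone fun t => sInf (S t) := fun t t' htt' =>
    csInf_le_csInf (hbdd t) (insert_nonempty _ _)
      (insert_subset_insert (image_mono fun i hi => ⟨hi.1, htt'.trans hi.2⟩))
  have hpos : ∀ t, 0 < t → 0 < sInf (S t) := by
    intro t ht
    obtain ⟨c, hc, hcG⟩ := hgrowth t ht
    refine (lt_min hc one_pos).trans_le (le_csInf (insert_nonempty _ _) ?_)
    rintro _ (rfl | ⟨i, ⟨hi, hti⟩, rfl⟩)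
    · exact min_le_right _ _
    · exact (min_le_left _ _).trans ((le_div_iff₀ (ht.trans_le hti)).2 (hcG i hi hti))
  refine ⟨_, kInf_primitive_of_monotone hmono hpos, fun i hi => ?_⟩
  rcases (hd i).eq_or_lt with h0 | h0
  · simpa [← h0] using hG i hi
  calc ∫ t in (0 : ℝ)..d i, sInf (S t) ≤ d i * sInf (S (d i)) := hmono.integral_le_mul (hd i)
    _ ≤ G i := (le_div_iff₀' h0).1 (csInf_le (hbdd _) (mem_insert_of_mem _ ⟨i, ⟨hi, le_rfl⟩, rfl⟩))

theorem convex_setOf_forall_nonpos {E ι : Type*} [AddCommGroup E] [Module ℝ E] {g : E → ι → ℝ}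
    (hg : ∀ i, ConvexOn ℝ univ fun z => g z i) : Convex ℝ {z | ∀ i, g z i ≤ 0} := by
  simpa only [ofPred_forall] using convex_iInter fun i => by simpa using (hg i).convex_le 0

section SublevelSet

variable {E ι : Type*} [NormedAddCommGroup E] [NormedSpace ℝ E] [FiniteDimensional ℝ E]
  {g : E → ι → ℝ}

theorem isClosed_setOf_forall_nonpos (hg : ∀ i, ConvexOn ℝ univ fun z => g z i) :
    IsClosed {z | ∀ i, g z i ≤ 0} := by
  simpa only [ofPred_forall] using
    isClosed_iInter fun i => isClosed_le (hg i).locallyLipschitz.continuous continuous_const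

theorem setOf_forall_neg_subset_interior [Finite ι] (hg : ∀ i, ConvexOn ℝ univ fun z => g z i) :
    {z | ∀ i, g z i < 0} ⊆ interior {z | ∀ i, g z i ≤ 0} :=
  interior_maximal (fun _ hz i => (hz i).le) <| by
    simpa only [ofPred_forall] using
      isOpen_iInter_of_finite fun i => isOpen_lt (hg i).locallyLipschitz.continuous continuous_const

end SublevelSet

theorem bddOnBddSubsets_of_continuous {n : ℕ} {X : Set (Vec n)} {lam : Vec n → ℝ}
    (hlam : Continuous lam) : BddOnBddSubsets X lam := fun _ _ hS =>
  (hS.isCompact_closure.image hlam).isBounded.subset (image_mono subset_closure)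

theorem stmt1_general {n m p : ℕ} (A : Matrix (Fin n) (Fin n) ℝ) (B : Matrix (Fin n) (Fin m) ℝ)
    (f : Vec n × Vec m → Vec n) (hf : f = fun z => A.mulVec z.1 + B.mulVec z.2)
    (g : Vec n × Vec m → Fin p → ℝ) (Y : Set (Vec n × Vec m))
    (hY : Y = {z | ∀ i, g z i ≤ 0})
    (hg : ∀ i, ConvexOn ℝ univ fun z => g z i)
    (ℓ ℓhat : Vec n × Vec m → ℝ) (hhat : StrictConvexOn ℝ univ ℓhat)
    (hle : ∀ z ∈ Y, ℓhat z ≤ ℓ z)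
    (xe : Vec n) (ue : Vec m) (htouch : ℓhat (xe, ue) = ℓ (xe, ue))
    (hmem : (xe, ue) ∈ Y) (heq : f (xe, ue) = xe)
    (hmin : ∀ z ∈ Y, f z = z.1 → ℓhat (xe, ue) ≤ ℓhat z)
    (slater : ∃ z : Vec n × Vec m, (∀ i, g z i < 0) ∧ z.1 - A.mulVec z.1 - B.mulVec z.2 = 0) :
    ∃ ν : Vec n, ∃ α : ℝ → ℝ,
      StrictPreDissipativeWith f Y ℓ xe ue (fun x => ν ⬝ᵥ x) α := by
  obtain ⟨L, hL⟩ : ∃ L : Vec n × Vec m →ₗ[ℝ] Vec n, ∀ z, L z = z.1 - f z :=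
    ⟨LinearMap.fst ℝ _ _ -
      (A.mulVecLin ∘ₗ LinearMap.fst ℝ _ _ + B.mulVecLin ∘ₗ LinearMap.snd ℝ _ _),
      fun z => by simp [hf]⟩
  subst hY
  have hYconv := convex_setOf_forall_nonpos hg
  have hhatY := hhat.subset (subset_univ _) hYconv
  obtain ⟨z₀, hz₀, hLz₀⟩ := slater
  obtain ⟨φ, hφ⟩ := exists_lagrange_multiplier (L := L) hYconv hhatY.convexOn
    hhat.convexOn.locallyLipschitz.continuous
    (fun z hz hLz => hmin z hz (sub_eq_zero.1 ((hL z).symm.trans hLz)).symm)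
    (setOf_forall_neg_subset_interior hg hz₀) (by simpa [hL, hf, sub_sub] using hLz₀)
  set G := fun z => ℓhat z + φ (L z)
  have hLe : L (xe, ue) = 0 := by rw [hL, heq, sub_self]
  have hGmin : IsMinOn G _ (xe, ue) := fun z hz => by simpa [G, hLe] using hφ z hz
  have hGstrict : StrictConvexOn ℝ _ G := hhatY.add_convexOn ((φ ∘ₗ L).convexOn hYconv)
  obtain ⟨α, hα, hαG⟩ := exists_kInf_le_of_linear_growth (d := fun z => ‖z - (xe, ue)‖)
    (G := fun z => G z - G (xe, ue)) (fun _ => norm_nonneg _) (fun z hz => sub_nonneg.2 (hGmin hz))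
    fun ρ hρ => hGstrict.convexOn.exists_linear_growth (isClosed_setOf_forall_nonpos hg)
      (hhat.convexOn.locallyLipschitz.continuous.add
        (φ ∘ₗ L).continuous_of_finiteDimensional).continuousOn hmem
      (fun z hz hne => hGstrict.lt_of_isMinOn hGmin hmem hz hne) hρ
  set ν := (dotProductEquiv ℝ (Fin n)).symm φ
  have hν : ∀ x, ν ⬝ᵥ x = φ x := fun x =>
    LinearMap.congr_fun ((dotProductEquiv ℝ (Fin n)).apply_symm_apply φ) x
  have hφL : ∀ z, φ (L z) = ν ⬝ᵥ z.1 - ν ⬝ᵥ f z := fun z => by rw [hL, ← hν, dotProduct_sub]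
  refine ⟨ν, α, hmem, heq, bddOnBddSubsets_of_continuous (by fun_prop), hα, fun z hz _ => ?_⟩
  calc α ‖z.1 - xe‖ ≤ α ‖z - (xe, ue)‖ :=
        hα.2.1.monotoneOn (norm_nonneg _) (norm_nonneg _) (norm_fst_le (z - (xe, ue)))
    _ ≤ G z - G (xe, ue) := hαG z hz
    _ ≤ ℓ z - ℓ (xe, ue) + ν ⬝ᵥ z.1 - ν ⬝ᵥ f z := by
        simp only [G, hφL, heq, sub_self, add_zero]
        linarith [hle z hz]

/-- Proposition 2.5: for linear dynamics and a stage cost `ℓ` that is bounded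
from below on `Y` by a strictly convex function `ℓ̂` touching it at the strictly globally optimal
equilibrium of `ℓ̂`, under the Slater condition the system is strictly pre-dissipative for `ℓ`
with a linear storage function. -/
theorem stmt1 {n m p : ℕ} (A : Matrix (Fin n) (Fin n) ℝ) (B : Matrix (Fin n) (Fin m) ℝ)
    (f : Vec n × Vec m → Vec n) (hf : f = fun z => A.mulVec z.1 + B.mulVec z.2)
    (g : Vec n × Vec m → Fin p → ℝ) (Y : Set (Vec n × Vec m))
    (hY : Y = {z | ∀ i, g z i ≤ 0})
    (hg : ∀ i, ConvexOn ℝ univ fun z => g z i)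
    (ℓ ℓhat : Vec n × Vec m → ℝ) (hhat : StrictConvexOn ℝ univ ℓhat)
    (hle : ∀ z ∈ Y, ℓhat z ≤ ℓ z)
    (xe : Vec n) (ue : Vec m) (htouch : ℓhat (xe, ue) = ℓ (xe, ue))
    (hmem : (xe, ue) ∈ Y) (heq : f (xe, ue) = xe)
    (hmin : ∀ z ∈ Y, f z = z.1 → ℓhat (xe, ue) ≤ ℓhat z)
    (hstrictmin : ∀ z ∈ Y, f z = z.1 → z.1 ≠ xe → ℓhat (xe, ue) < ℓhat z)
    (slater : ∃ z : Vec n × Vec m, (∀ i, g z i < 0) ∧ z.1 - A.mulVec z.1 - B.mulVec z.2 = 0) :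
    ∃ ν : Vec n, ∃ α : ℝ → ℝ,
      StrictPreDissipativeWith f Y ℓ xe ue (fun x => ν ⬝ᵥ x) α :=
  stmt1_general A B f hf g Y hY hg ℓ ℓhat hhat hle xe ue htouch hmem heq hmin slater
end

section
/- Let x⁺ = f(x,u) be a discrete-time control system with constraint set Y ⊆ ℝⁿ × ℝᵐ and suppose the system is strictly dissipative for a stage cost ℓ at an equilibrium (xᵉ,uᵉ) lying in the interior of Y, with storage function λ. Assume f, ℓ and λ are continuously differentiable. Then there exists a Lagrange multiplier νᵉ ∈ ℝⁿ such that (xᵉ,uᵉ,νᵉ) satisfies the first-order necessary (KKT) conditions of the problem min_{(x,u)} ℓ(x,u) subject to x − f(x,u) = 0, i.e. the gradient with respect to (x,u) of the Lagrange function L(x,u,ν) = ℓ(x,u) + νᵀ(x − f(x,u)) vanishes at (xᵉ,uᵉ,νᵉ) and x − f(x,u) = 0 holds there, and moreover the identity ∇ₓλ(xᵉ) = νᵉ holds. -/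
open Set Bornology Matrix Filter

/-!
By strict dissipativity the rotated cost `ℓ(x,u) - ℓ(xᵉ,uᵉ) + λ(x) - λ(f(x,u))` is nonnegative
near the interior equilibrium and vanishes there, so its derivative vanishes at `(xᵉ,uᵉ)`.
Since `f(xᵉ,uᵉ) = xᵉ`, the chain rule gives `λ'(xᵉ) ∘ (π₁ - f'(xᵉ,uᵉ))` for the derivative of
`λ(x) - λ(f(x,u))`, which is also the derivative of `νᵀ(x - f(x,u))` when `ν` is the gradient
`∇λ(xᵉ)`. Hence the Lagrangian with multiplier `∇λ(xᵉ)` is stationary at `(xᵉ,uᵉ)`.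
-/

open Topology

def rotatedCost {n m : ℕ} (f : Vec n × Vec m → Vec n) (ℓ : Vec n × Vec m → ℝ) (xe : Vec n)
    (ue : Vec m) (lam : Vec n → ℝ) (z : Vec n × Vec m) : ℝ :=
  ℓ z - ℓ (xe, ue) + lam z.1 - lam (f z)

theorem Module.Dual.exists_dotProduct_eq {R ι : Type*} [CommSemiring R] [Fintype ι]
    [DecidableEq ι] (L : Module.Dual R (ι → R)) : ∃ ν : ι → R, ∀ v, L v = ν ⬝ᵥ v :=
  ⟨(dotProductEquiv R ι).symm L, fun v =>
    (LinearMap.congr_fun ((dotProductEquiv R ι).apply_symm_apply L) v).symm⟩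

theorem stateSet_mem_nhds {n m : ℕ} {Y : Set (Vec n × Vec m)} {xe : Vec n} {ue : Vec m}
    (hint : (xe, ue) ∈ interior Y) : stateSet Y ∈ 𝓝 xe :=
  mem_of_superset ((Continuous.prodMk_left ue).continuousAt.preimage_mem_nhds
    (mem_interior_iff_mem_nhds.mp hint)) fun _ hx => ⟨ue, hx⟩

section

variable {n m : ℕ} {f : Vec n × Vec m → Vec n} {Y : Set (Vec n × Vec m)}
  {ℓ : Vec n × Vec m → ℝ} {xe : Vec n} {ue : Vec m} {lam : Vec n → ℝ}

theorem rotatedCost_equilibrium (hfe : f (xe, ue) = xe) :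
    rotatedCost f ℓ xe ue lam (xe, ue) = 0 := by
  simp [rotatedCost, hfe]

theorem StrictPreDissipativeWith.isLocalMin_rotatedCost {α : ℝ → ℝ}
    (hdiss : StrictPreDissipativeWith f Y ℓ xe ue lam α) (hint : (xe, ue) ∈ interior Y)
    (hf : ContinuousAt f (xe, ue)) : IsLocalMin (rotatedCost f ℓ xe ue lam) (xe, ue) := by
  obtain ⟨-, hfe, -, hα, hineq⟩ := hdiss
  have hfX : {z | f z ∈ stateSet Y} ∈ 𝓝 (xe, ue) :=
    hf.preimage_mem_nhds (by rw [hfe]; exact stateSet_mem_nhds hint)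
  filter_upwards [mem_interior_iff_mem_nhds.mp hint, hfX] with z hzY hzX
  rw [rotatedCost_equilibrium hfe]
  exact (hα.2.2.2.1 _ (norm_nonneg _)).trans (hineq z hzY hzX)

theorem hasFDerivAt_rotatedCost {A : Vec n × Vec m →L[ℝ] ℝ} {B : Vec n × Vec m →L[ℝ] Vec n}
    {L : Vec n →L[ℝ] ℝ} (hℓ : HasFDerivAt ℓ A (xe, ue)) (hf : HasFDerivAt f B (xe, ue))
    (hlam : HasFDerivAt lam L xe) (hfe : f (xe, ue) = xe) :
    HasFDerivAt (rotatedCost f ℓ xe ue lam)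
      (A + L.comp (ContinuousLinearMap.fst ℝ (Vec n) (Vec m) - B)) (xe, ue) := by
  have hlamf : HasFDerivAt lam L (f (xe, ue)) := by rwa [hfe]
  have h := ((hℓ.sub_const (ℓ (xe, ue))).add (hlam.comp (xe, ue) hasFDerivAt_fst)).sub
    (hlamf.comp (xe, ue) hf)
  rw [ContinuousLinearMap.comp_sub, ← add_sub_assoc]
  exact h

theorem hasFDerivAt_lagrangian {A : Vec n × Vec m →L[ℝ] ℝ} {B : Vec n × Vec m →L[ℝ] Vec n}
    {L : Vec n →L[ℝ] ℝ} {ν : Vec n} {z₀ : Vec n × Vec m} (hℓ : HasFDerivAt ℓ A z₀)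
    (hf : HasFDerivAt f B z₀) (hν : ∀ v, L v = ν ⬝ᵥ v) :
    HasFDerivAt (fun z : Vec n × Vec m => ℓ z + ν ⬝ᵥ (z.1 - f z))
      (A + L.comp (ContinuousLinearMap.fst ℝ (Vec n) (Vec m) - B)) z₀ := by
  simp only [← hν]
  exact hℓ.add (L.hasFDerivAt.comp z₀ (hasFDerivAt_fst.sub hf))

end

/-- Proposition 2.6: if the system is strictly dissipative with a `C¹` storage
function `λ` at an equilibrium in the interior of `Y`, and `f`, `ℓ` are `C¹`, then there is a
Lagrange multiplier `νᵉ` of the optimal equilibrium problem (the KKT conditions hold) with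
`∇λ(xᵉ) = νᵉ`. -/
theorem stmt3 {n m : ℕ} (f : Vec n × Vec m → Vec n) (Y : Set (Vec n × Vec m))
    (ℓ : Vec n × Vec m → ℝ) (xe : Vec n) (ue : Vec m) (lam : Vec n → ℝ)
    (hdiss : ∃ α : ℝ → ℝ, StrictDissipativeWith f Y ℓ xe ue lam α)
    (hint : (xe, ue) ∈ interior Y)
    (hf : ContDiff ℝ 1 f) (hℓ : ContDiff ℝ 1 ℓ) (hlam : ContDiff ℝ 1 lam) :
    ∃ ν : Vec n,
      fderiv ℝ (fun z : Vec n × Vec m => ℓ z + ν ⬝ᵥ (z.1 - f z)) (xe, ue) = 0 ∧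
      xe - f (xe, ue) = 0 ∧
      ∀ v : Vec n, fderiv ℝ lam xe v = ν ⬝ᵥ v := by
  obtain ⟨α, hdiss, -⟩ := hdiss
  have hfe := hdiss.2.1
  obtain ⟨ν, hν⟩ := Module.Dual.exists_dotProduct_eq (fderiv ℝ lam xe : Module.Dual ℝ (Vec n))
  have hℓd := (hℓ.differentiable one_ne_zero (xe, ue)).hasFDerivAt
  have hfd := (hf.differentiable one_ne_zero (xe, ue)).hasFDerivAt
  have hlamd := (hlam.differentiable one_ne_zero xe).hasFDerivAt
  refine ⟨ν, ?_, sub_eq_zero.mpr hfe.symm, hν⟩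
  rw [(hasFDerivAt_lagrangian hℓd hfd hν).fderiv]
  exact (hdiss.isLocalMin_rotatedCost hint hfd.continuousAt).hasFDerivAt_eq_zero
    (hasFDerivAt_rotatedCost hℓd hfd hlamd hfe)
end

section
/- Let a, b ∈ ℝ and q₁, q₂, r₁, r₂, s₁, s₂, v₁, v₂ ∈ ℝ with qᵢ, rᵢ > 0, and assume b ≠ 0 or a ≠ 1 (so that all denominators below are positive). Define νᵢ = (qᵢvᵢb − (1−a)rᵢsᵢ)/(qᵢb² + (1−a)²rᵢ) for i = 1,2 and, for μ ∈ [0,1], ν_μ = [b(μq₁+(1−μ)q₂)(μv₁+(1−μ)v₂) − (1−a)(μr₁+(1−μ)r₂)(μs₁+(1−μ)s₂)] / [b²(μq₁+(1−μ)q₂) + (1−a)²(μr₁+(1−μ)r₂)]. If a = 1 or q₁r₂ = q₂r₁, then ν_μ = μν₁ + (1−μ)ν₂ for all μ ∈ [0,1]. -/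
open Set

/-!
In both cases there is a `t` with `(1 - a) rᵢ = (1 - a) t qᵢ` (any `t` if `a = 1`, `t = r₁ / q₁`
otherwise), and this proportionality survives convex combination. Cancelling `q` then turns the
multiplier into `(v b - (1 - a) t s) / (b² + (1 - a)² t)`, which is affine in `(s, v)` and
therefore commutes with convex combinations.
-/

namespace ScalarLQ

/-- The Lagrange multiplier `ν` of the equilibrium problem for the stage cost with coefficients
`q r s v`. -/
noncomputable def equilibriumMultiplier (a b q r s v : ℝ) : ℝ :=
  (q * v * b - (1 - a) * r * s) / (q * b ^ 2 + (1 - a) ^ 2 * r)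

theorem equilibriumMultiplier_eq_of_proportional {a b q r t : ℝ} (s v : ℝ) (hq : q ≠ 0)
    (hr : (1 - a) * r = (1 - a) * (t * q)) :
    equilibriumMultiplier a b q r s v = (v * b - (1 - a) * t * s) / (b ^ 2 + (1 - a) ^ 2 * t) := by
  have hnum : q * v * b - (1 - a) * r * s = q * (v * b - (1 - a) * t * s) := by
    linear_combination (-s) * hr
  have hden : q * b ^ 2 + (1 - a) ^ 2 * r = q * (b ^ 2 + (1 - a) ^ 2 * t) := by
    linear_combination (1 - a) * hr
  rw [equilibriumMultiplier, hnum, hden, mul_div_mul_left _ _ hq]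

theorem exists_proportional_of_eq_one_or_cross_eq {a q₁ q₂ r₁ r₂ : ℝ} (hq₁ : q₁ ≠ 0)
    (h : a = 1 ∨ q₁ * r₂ = q₂ * r₁) :
    ∃ t, (1 - a) * r₁ = (1 - a) * (t * q₁) ∧ (1 - a) * r₂ = (1 - a) * (t * q₂) := by
  rcases h with rfl | h
  · exact ⟨0, by simp, by simp⟩
  · refine ⟨r₁ / q₁, ?_, ?_⟩
    · rw [div_mul_cancel₀ _ hq₁]
    · rw [div_mul_eq_mul_div, eq_div_iff hq₁ |>.mpr (by linarith : r₂ * q₁ = r₁ * q₂)]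

theorem equilibriumMultiplier_convexCombination {a b q₁ q₂ r₁ r₂ t μ : ℝ} (s₁ s₂ v₁ v₂ : ℝ)
    (hq₁ : q₁ ≠ 0) (hq₂ : q₂ ≠ 0) (hqμ : μ * q₁ + (1 - μ) * q₂ ≠ 0)
    (hr₁ : (1 - a) * r₁ = (1 - a) * (t * q₁)) (hr₂ : (1 - a) * r₂ = (1 - a) * (t * q₂)) :
    equilibriumMultiplier a b (μ * q₁ + (1 - μ) * q₂) (μ * r₁ + (1 - μ) * r₂)
        (μ * s₁ + (1 - μ) * s₂) (μ * v₁ + (1 - μ) * v₂) =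
      μ * equilibriumMultiplier a b q₁ r₁ s₁ v₁ +
        (1 - μ) * equilibriumMultiplier a b q₂ r₂ s₂ v₂ := by
  have hrμ : (1 - a) * (μ * r₁ + (1 - μ) * r₂) = (1 - a) * (t * (μ * q₁ + (1 - μ) * q₂)) := by
    linear_combination μ * hr₁ + (1 - μ) * hr₂
  rw [equilibriumMultiplier_eq_of_proportional _ _ hqμ hrμ,
    equilibriumMultiplier_eq_of_proportional _ _ hq₁ hr₁,
    equilibriumMultiplier_eq_of_proportional _ _ hq₂ hr₂]
  ring

end ScalarLQ

open ScalarLQ in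
theorem stmt8_general (a b q₁ q₂ r₁ r₂ s₁ s₂ v₁ v₂ : ℝ)
    (hq₁ : 0 < q₁) (hq₂ : 0 < q₂)
    (ν₁ ν₂ : ℝ)
    (hν₁ : ν₁ = (q₁ * v₁ * b - (1 - a) * r₁ * s₁) / (q₁ * b ^ 2 + (1 - a) ^ 2 * r₁))
    (hν₂ : ν₂ = (q₂ * v₂ * b - (1 - a) * r₂ * s₂) / (q₂ * b ^ 2 + (1 - a) ^ 2 * r₂))
    (νμ : ℝ → ℝ)
    (hνμ : ∀ μ : ℝ, νμ μ =
      (b * (μ * q₁ + (1 - μ) * q₂) * (μ * v₁ + (1 - μ) * v₂) -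
        (1 - a) * (μ * r₁ + (1 - μ) * r₂) * (μ * s₁ + (1 - μ) * s₂)) /
      (b ^ 2 * (μ * q₁ + (1 - μ) * q₂) + (1 - a) ^ 2 * (μ * r₁ + (1 - μ) * r₂)))
    (hcase : a = 1 ∨ q₁ * r₂ = q₂ * r₁) :
    ∀ μ ∈ Icc (0 : ℝ) 1, νμ μ = μ * ν₁ + (1 - μ) * ν₂ := by
  rintro μ ⟨hμ0, hμ1⟩
  obtain ⟨t, hr₁, hr₂⟩ := exists_proportional_of_eq_one_or_cross_eq hq₁.ne' hcase
  have hqμ : 0 < μ * q₁ + (1 - μ) * q₂ := by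
    simpa using convex_Ioi (0 : ℝ) hq₁ hq₂ hμ0 (sub_nonneg.2 hμ1) (add_sub_cancel μ 1)
  have hνμ_eq : νμ μ = equilibriumMultiplier a b (μ * q₁ + (1 - μ) * q₂)
      (μ * r₁ + (1 - μ) * r₂) (μ * s₁ + (1 - μ) * s₂) (μ * v₁ + (1 - μ) * v₂) := by
    rw [hνμ, equilibriumMultiplier]
    congr 1 <;> ring
  rw [hνμ_eq, hν₁, hν₂]
  exact equilibriumMultiplier_convexCombination _ _ _ _ hq₁.ne' hq₂.ne' hqμ.ne' hr₁ hr₂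

/-- Example 3.3: for the scalar LQ problem, if `a = 1` or `q₁ r₂ = q₂ r₁`,
then the Lagrange multiplier `ν_μ` of the combined problem is the convex combination
`μ ν₁ + (1-μ) ν₂` of the individual Lagrange multipliers for all `μ ∈ [0,1]`. -/
theorem stmt8 (a b q₁ q₂ r₁ r₂ s₁ s₂ v₁ v₂ : ℝ)
    (hq₁ : 0 < q₁) (hq₂ : 0 < q₂) (hr₁ : 0 < r₁) (hr₂ : 0 < r₂)
    (hab : b ≠ 0 ∨ a ≠ 1)
    (ν₁ ν₂ : ℝ)
    (hν₁ : ν₁ = (q₁ * v₁ * b - (1 - a) * r₁ * s₁) / (q₁ * b ^ 2 + (1 - a) ^ 2 * r₁))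
    (hν₂ : ν₂ = (q₂ * v₂ * b - (1 - a) * r₂ * s₂) / (q₂ * b ^ 2 + (1 - a) ^ 2 * r₂))
    (νμ : ℝ → ℝ)
    (hνμ : ∀ μ : ℝ, νμ μ =
      (b * (μ * q₁ + (1 - μ) * q₂) * (μ * v₁ + (1 - μ) * v₂) -
        (1 - a) * (μ * r₁ + (1 - μ) * r₂) * (μ * s₁ + (1 - μ) * s₂)) /
      (b ^ 2 * (μ * q₁ + (1 - μ) * q₂) + (1 - a) ^ 2 * (μ * r₁ + (1 - μ) * r₂)))
    (hcase : a = 1 ∨ q₁ * r₂ = q₂ * r₁) :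
    ∀ μ ∈ Icc (0 : ℝ) 1, νμ μ = μ * ν₁ + (1 - μ) * ν₂ :=
  stmt8_general a b q₁ q₂ r₁ r₂ s₁ s₂ v₁ v₂ hq₁ hq₂ ν₁ ν₂ hν₁ hν₂ νμ hνμ hcase
end

section
/- Let x⁺ = f(x,u) be a discrete-time control system with f continuous, constraint set Y, and continuous stage costs ℓ₁, ℓ₂ : Y → ℝ. Assume that for every μ in a compact interval [μ̲, μ̄] ⊆ [0,1] the system is strictly dissipative for the cost ℓ_μ = μℓ₁ + (1−μ)ℓ₂ at an equilibrium (xᵉ_μ,uᵉ_μ), and that all these equilibria are contained in a compact set Ŷ ⊂ Y. Then the map μ ↦ xᵉ_μ is continuous on [μ̲, μ̄]. -/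
/-!
Strict dissipativity makes `(xᵉ_μ, uᵉ_μ)` a minimizer of `ℓ_μ` among all equilibria in `Y`, and
since the `K∞` bound vanishes only at `0`, every other minimizing equilibrium has state `xᵉ_μ`.
The equilibria in `Ŷ` form a compact set on which `(μ, z) ↦ ℓ_μ z` is continuous, so along any
sequence `μ_k → μ` a subsequence of `(xᵉ_{μ_k}, uᵉ_{μ_k})` converges to an equilibrium `z` with
`ℓ_μ z ≤ ℓ_μ (xᵉ_μ, uᵉ_μ)`, hence with state `xᵉ_μ`.
-/

open Set Bornology Matrix Filter

open Topology

theorem continuousOn_comp_of_isMinOn {T Z W : Type*} [TopologicalSpace T]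
    [FirstCountableTopology T] [TopologicalSpace Z] [FirstCountableTopology Z]
    [TopologicalSpace W] {s : Set T} {K : Set Z} (hK : IsCompact K)
    {c : T → Z → ℝ} (hc : ContinuousOn (Function.uncurry c) (s ×ˢ K)) {e : T → Z}
    (he : MapsTo e s K) (hmin : ∀ t ∈ s, IsMinOn (c t) K (e t)) {p : Z → W} (hp : Continuous p)
    (huniq : ∀ t ∈ s, ∀ z ∈ K, c t z ≤ c t (e t) → p z = p (e t)) :
    ContinuousOn (p ∘ e) s := by
  intro t₀ ht₀
  refine tendsto_of_subseq_tendsto fun ns hns => ?_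
  have hs : ∀ᶠ k in atTop, ns k ∈ s := hns.eventually self_mem_nhdsWithin
  obtain ⟨z, hzK, φ, hφ, hez⟩ := hK.tendsto_subseq' (hs.mono fun k hk => he hk).frequently
  have hsφ : ∀ᶠ k in atTop, ns (φ k) ∈ s := hφ.tendsto_atTop.eventually hs
  have hnsφ : Tendsto (ns ∘ φ) atTop (𝓝 t₀) :=
    (tendsto_nhdsWithin_iff.1 hns).1.comp hφ.tendsto_atTop
  have hcost : Tendsto (fun k => c (ns (φ k)) (e (ns (φ k)))) atTop (𝓝 (c t₀ z)) :=
    (hc (t₀, z) ⟨ht₀, hzK⟩).tendsto.comp <| tendsto_nhdsWithin_iff.2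
      ⟨hnsφ.prodMk_nhds hez, hsφ.mono fun k hk => ⟨hk, he hk⟩⟩
  have hcost₀ : Tendsto (fun k => c (ns (φ k)) (e t₀)) atTop (𝓝 (c t₀ (e t₀))) :=
    (hc (t₀, e t₀) ⟨ht₀, he ht₀⟩).tendsto.comp <| tendsto_nhdsWithin_iff.2
      ⟨hnsφ.prodMk_nhds tendsto_const_nhds, hsφ.mono fun k hk => ⟨hk, he ht₀⟩⟩
  have hle : c t₀ z ≤ c t₀ (e t₀) :=
    le_of_tendsto_of_tendsto hcost hcost₀ <|
      hsφ.mono fun k hk => isMinOn_iff.1 (hmin _ hk) _ (he ht₀)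
  refine ⟨φ, ?_⟩
  rw [Function.comp_apply, ← huniq t₀ ht₀ z hzK hle]
  exact (hp.tendsto z).comp hez

theorem KInf.pos {α : ℝ → ℝ} (hα : KInf α) {r : ℝ} (hr : 0 < r) : 0 < α r := by
  obtain ⟨-, hmono, h0, -⟩ := hα
  simpa [h0] using hmono self_mem_Ici hr.le hr

theorem KInf.nonneg {α : ℝ → ℝ} (hα : KInf α) {r : ℝ} (hr : 0 ≤ r) : 0 ≤ α r :=
  hα.2.2.2.1 r hr

section Dissipativity

variable {n m : ℕ} {f : Vec n × Vec m → Vec n} {Y : Set (Vec n × Vec m)}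
  {ℓ : Vec n × Vec m → ℝ} {xe : Vec n} {ue : Vec m} {lam : Vec n → ℝ} {α : ℝ → ℝ}

lemma DissIneq.le_sub_of_equilibrium (h : DissIneq f Y ℓ xe ue lam α) {z : Vec n × Vec m}
    (hz : z ∈ {z ∈ Y | f z = z.1}) : α ‖z.1 - xe‖ ≤ ℓ z - ℓ (xe, ue) := by
  have := h z hz.1 (hz.2 ▸ ⟨z.2, hz.1⟩)
  rwa [hz.2, add_sub_cancel_right] at this

theorem DissIneq.isMinOn (h : DissIneq f Y ℓ xe ue lam α) (hα : ∀ ⦃r⦄, 0 ≤ r → 0 ≤ α r) :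
    IsMinOn ℓ {z ∈ Y | f z = z.1} (xe, ue) :=
  isMinOn_iff.2 fun z hz => by linarith [h.le_sub_of_equilibrium hz, hα (norm_nonneg (z.1 - xe))]

theorem DissIneq.fst_eq_of_le (h : DissIneq f Y ℓ xe ue lam α) (hα : KInf α)
    {z : Vec n × Vec m} (hz : z ∈ {z ∈ Y | f z = z.1}) (hle : ℓ z ≤ ℓ (xe, ue)) :
    z.1 = xe := by
  by_contra hne
  have := hα.pos (norm_pos_iff.2 (sub_ne_zero.2 hne))
  linarith [h.le_sub_of_equilibrium hz]

end Dissipativity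

theorem stmt9_general {n m : ℕ} (f : Vec n × Vec m → Vec n) (hf : Continuous f)
    (Y : Set (Vec n × Vec m)) (ℓ₁ ℓ₂ : Vec n × Vec m → ℝ)
    (hℓ₁ : ContinuousOn ℓ₁ Y) (hℓ₂ : ContinuousOn ℓ₂ Y)
    (μlo μhi : ℝ)
    (xe : ℝ → Vec n) (ue : ℝ → Vec m)
    (hdiss : ∀ μ ∈ Icc μlo μhi,
      StrictDissipative f Y (fun z => μ * ℓ₁ z + (1 - μ) * ℓ₂ z) (xe μ) (ue μ))
    (Yhat : Set (Vec n × Vec m)) (hYhat : IsCompact Yhat) (hYhatY : Yhat ⊆ Y)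
    (heqin : ∀ μ ∈ Icc μlo μhi, (xe μ, ue μ) ∈ Yhat) :
    ContinuousOn xe (Icc μlo μhi) := by
  set K := Yhat ∩ {z | f z = z.1}
  have hKeq : K ⊆ {z ∈ Y | f z = z.1} := fun z hz => ⟨hYhatY hz.1, hz.2⟩
  have hcost : ContinuousOn (Function.uncurry fun μ z => μ * ℓ₁ z + (1 - μ) * ℓ₂ z)
      (Icc μlo μhi ×ˢ K) := by
    have hsnd : MapsTo Prod.snd (Icc μlo μhi ×ˢ K) Y := fun p hp => (hKeq hp.2).1
    exact (continuousOn_fst.mul (hℓ₁.comp continuousOn_snd hsnd)).add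
      ((continuousOn_const.sub continuousOn_fst).mul (hℓ₂.comp continuousOn_snd hsnd))
  refine continuousOn_comp_of_isMinOn (e := fun μ => (xe μ, ue μ)) (p := Prod.fst)
    (hYhat.inter_right (isClosed_eq hf continuous_fst)) hcost ?_ ?_ continuous_fst ?_
  · intro μ hμ
    obtain ⟨lam, α, ⟨-, hfix, -⟩, -⟩ := hdiss μ hμ
    exact ⟨heqin μ hμ, hfix⟩
  · intro μ hμ
    obtain ⟨lam, α, ⟨-, -, -, hα, hineq⟩, -⟩ := hdiss μ hμ
    exact (hineq.isMinOn fun _ => hα.nonneg).on_subset hKeq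
  · intro μ hμ z hz hle
    obtain ⟨lam, α, ⟨-, -, -, hα, hineq⟩, -⟩ := hdiss μ hμ
    exact hineq.fst_eq_of_le hα (hKeq hz) hle

/-- Theorem 4.1: if the system is strictly dissipative for
`ℓ_μ = μ ℓ₁ + (1-μ) ℓ₂` at equilibria `(xᵉ_μ, uᵉ_μ)` for all `μ` in a compact subinterval
`[μ̲, μ̄] ⊆ [0,1]`, and these equilibria lie in a compact subset of `Y`, then `μ ↦ xᵉ_μ`
is continuous on `[μ̲, μ̄]`. -/
theorem stmt9 {n m : ℕ} (f : Vec n × Vec m → Vec n) (hf : Continuous f)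
    (Y : Set (Vec n × Vec m)) (ℓ₁ ℓ₂ : Vec n × Vec m → ℝ)
    (hℓ₁ : ContinuousOn ℓ₁ Y) (hℓ₂ : ContinuousOn ℓ₂ Y)
    (μlo μhi : ℝ) (hsub : Icc μlo μhi ⊆ Icc (0 : ℝ) 1)
    (xe : ℝ → Vec n) (ue : ℝ → Vec m)
    (hdiss : ∀ μ ∈ Icc μlo μhi,
      StrictDissipative f Y (fun z => μ * ℓ₁ z + (1 - μ) * ℓ₂ z) (xe μ) (ue μ))
    (Yhat : Set (Vec n × Vec m)) (hYhat : IsCompact Yhat) (hYhatY : Yhat ⊆ Y)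
    (heqin : ∀ μ ∈ Icc μlo μhi, (xe μ, ue μ) ∈ Yhat) :
    ContinuousOn xe (Icc μlo μhi) :=
  stmt9_general f hf Y ℓ₁ ℓ₂ hℓ₁ hℓ₂ μlo μhi xe ue hdiss Yhat hYhat hYhatY heqin
end

section
/- Let x⁺ = f(x,u) be a discrete-time control system with constraint set Y and let ℓ₁,…,ℓ_m be stage costs. Assume that for each i = 1,…,m the system is strictly dissipative for ℓᵢ at one and the same equilibrium (xᵉ,uᵉ), with storage function λᵢ and class-K∞ bound αᵢ. Then for all weights μ₁,…,μ_m ∈ [0,1] with μ₁ + … + μ_m = 1, the system is strictly dissipative for the convexly combined stage cost ℓ_μ = Σᵢ μᵢℓᵢ at (xᵉ,uᵉ), with storage function λ_μ = Σᵢ μᵢλᵢ and class-K∞ bound α_μ = Σᵢ μᵢαᵢ. -/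
open Set Bornology Matrix Filter

/-! The weighted sums `∑ μᵢ ℓᵢ`, `∑ μᵢ λᵢ`, `∑ μᵢ αᵢ` are combined termwise: every defining
property of strict dissipativity is either linear (the dissipation inequality) or preserved by
nonnegative combinations (lower bounds, boundedness, the `K∞` properties). Strict monotonicity
and unboundedness of `∑ μᵢ αᵢ` need one strictly positive weight, which `∑ μᵢ = 1` provides. -/

section WeightedSum

variable {ι : Type*} [Fintype ι] {μ : ι → ℝ}

lemma KInf.weighted_sum {α : ι → ℝ → ℝ} (hα : ∀ i, KInf (α i)) (hμ : ∀ i, 0 ≤ μ i)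
    {j : ι} (hj : 0 < μ j) : KInf (fun r => ∑ i, μ i * α i r) := by
  have hterm_nonneg : ∀ i, ∀ r ∈ Ici (0 : ℝ), 0 ≤ μ i * α i r :=
    fun i r hr => mul_nonneg (hμ i) ((hα i).2.2.2.1 r hr)
  refine ⟨?_, ?_, ?_, ?_, ?_⟩
  · exact continuousOn_finsetSum _ fun i _ => continuousOn_const.mul (hα i).1
  · intro a ha b hb hab
    refine Finset.sum_lt_sum (fun i _ => ?_) ⟨j, Finset.mem_univ j, ?_⟩
    · exact mul_le_mul_of_nonneg_left ((hα i).2.1 ha hb hab).le (hμ i)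
    · exact mul_lt_mul_of_pos_left ((hα j).2.1 ha hb hab) hj
  · simp [fun i => (hα i).2.2.1]
  · exact fun r hr => Finset.sum_nonneg fun i _ => hterm_nonneg i r hr
  · intro M
    obtain ⟨r, hr, hMr⟩ := (hα j).2.2.2.2 (M / μ j)
    refine ⟨r, hr, ?_⟩
    calc M < μ j * α j r := by rwa [div_lt_iff₀' hj] at hMr
      _ ≤ ∑ i, μ i * α i r :=
        Finset.single_le_sum (fun i _ => hterm_nonneg i r hr) (Finset.mem_univ j)

lemma BddOnBddSubsets.weighted_sum {n : ℕ} {X : Set (Vec n)} {lam : ι → Vec n → ℝ}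
    (hlam : ∀ i, BddOnBddSubsets X (lam i)) (μ : ι → ℝ) :
    BddOnBddSubsets X (fun x => ∑ i, μ i * lam i x) := by
  intro S hS hSb
  choose C hC using fun i => isBounded_iff_forall_norm_le.1 (hlam i S hS hSb)
  refine isBounded_iff_forall_norm_le.2 ⟨∑ i, ‖μ i‖ * C i, ?_⟩
  rintro _ ⟨x, hx, rfl⟩
  calc ‖∑ i, μ i * lam i x‖ ≤ ∑ i, ‖μ i * lam i x‖ := norm_sum_le _ _
    _ ≤ ∑ i, ‖μ i‖ * C i := Finset.sum_le_sum fun i _ => by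
      rw [norm_mul]
      exact mul_le_mul_of_nonneg_left (hC i _ ⟨x, hx, rfl⟩) (norm_nonneg _)

lemma bddBelow_image_weighted_sum {β : Type*} {X : Set β} {lam : ι → β → ℝ}
    (hlam : ∀ i, BddBelow (lam i '' X)) (hμ : ∀ i, 0 ≤ μ i) :
    BddBelow ((fun x => ∑ i, μ i * lam i x) '' X) := by
  choose c hc using hlam
  refine ⟨∑ i, μ i * c i, ?_⟩
  rintro _ ⟨x, hx, rfl⟩
  exact Finset.sum_le_sum fun i _ => mul_le_mul_of_nonneg_left (hc i ⟨x, hx, rfl⟩) (hμ i)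

lemma DissIneq.weighted_sum {n m : ℕ} {f : Vec n × Vec m → Vec n} {Y : Set (Vec n × Vec m)}
    {ℓ : ι → Vec n × Vec m → ℝ} {xe : Vec n} {ue : Vec m} {lam : ι → Vec n → ℝ}
    {α : ι → ℝ → ℝ} (h : ∀ i, DissIneq f Y (ℓ i) xe ue (lam i) (α i)) (hμ : ∀ i, 0 ≤ μ i) :
    DissIneq f Y (fun z => ∑ i, μ i * ℓ i z) xe ue
      (fun x => ∑ i, μ i * lam i x) (fun r => ∑ i, μ i * α i r) := by
  intro z hz hfz
  calc ∑ i, μ i * α i ‖z.1 - xe‖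
      ≤ ∑ i, μ i * (ℓ i z - ℓ i (xe, ue) + lam i z.1 - lam i (f z)) :=
        Finset.sum_le_sum fun i _ => mul_le_mul_of_nonneg_left (h i z hz hfz) (hμ i)
    _ = _ := by simp only [mul_sub, mul_add, Finset.sum_sub_distrib, Finset.sum_add_distrib]

end WeightedSum

/-- Theorem 4.3, `m`-cost version: if the system is strictly dissipative for
each of the stage costs `ℓᵢ`, `i = 1,…,N`, at one and the same equilibrium `(xᵉ,uᵉ)` with
storage functions `λᵢ` and bounds `αᵢ`, then for all convex weights `μᵢ` it is strictly
dissipative for `ℓ_μ = Σ μᵢ ℓᵢ` at `(xᵉ,uᵉ)` with storage function `λ_μ = Σ μᵢ λᵢ` and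
bound `α_μ = Σ μᵢ αᵢ`. -/
theorem stmt12 {n k N : ℕ} (f : Vec n × Vec k → Vec n) (Y : Set (Vec n × Vec k))
    (ℓ : Fin N → (Vec n × Vec k → ℝ)) (xe : Vec n) (ue : Vec k)
    (lam : Fin N → (Vec n → ℝ)) (α : Fin N → (ℝ → ℝ))
    (h : ∀ i, StrictDissipativeWith f Y (ℓ i) xe ue (lam i) (α i))
    (μ : Fin N → ℝ) (hμ : ∀ i, μ i ∈ Icc (0 : ℝ) 1) (hsum : ∑ i, μ i = 1) :
    StrictDissipativeWith f Y (fun z => ∑ i, μ i * ℓ i z) xe ue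
      (fun x => ∑ i, μ i * lam i x) (fun r => ∑ i, μ i * α i r) := by
  have hμ0 : ∀ i, 0 ≤ μ i := fun i => (hμ i).1
  obtain ⟨j, -, hj⟩ : ∃ j ∈ Finset.univ, (0 : ℝ) < μ j :=
    Finset.exists_lt_of_sum_lt (f := 0) (by simp [hsum])
  obtain ⟨⟨hmem, hfe, -⟩, -⟩ := h j
  exact ⟨⟨hmem, hfe, BddOnBddSubsets.weighted_sum (fun i => (h i).1.2.2.1) μ,
    KInf.weighted_sum (fun i => (h i).1.2.2.2.1) hμ0 hj,
    DissIneq.weighted_sum (fun i => (h i).1.2.2.2.2) hμ0⟩,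
    bddBelow_image_weighted_sum (fun i => (h i).2) hμ0⟩
end

section
/- Let x⁺ = f(x,u) with f : ℝⁿ × ℝᵐ → ℝⁿ continuously differentiable, let ℓ₁, ℓ₂ be continuously differentiable stage costs and λ₁, λ₂ continuously differentiable functions on ℝⁿ. For μ ∈ [0,1] let ℓ_μ = μℓ₁ + (1−μ)ℓ₂, let (xᵉ_μ,uᵉ_μ) be an equilibrium (f(xᵉ_μ,uᵉ_μ) = xᵉ_μ) and ν_μ ∈ ℝⁿ a vector such that the gradient with respect to (x,u) of ℓ_μ(x,u) + ν_μᵀ(x − f(x,u)) vanishes at (xᵉ_μ,uᵉ_μ). Define λ̃_μ = ν_μ − μ∇ₓλ₁(xᵉ_μ) − (1−μ)∇ₓλ₂(xᵉ_μ), λ_μ(x) = μλ₁(x) + (1−μ)λ₂(x) + λ̃_μᵀx, and the rotated cost ℓ̃_μ(x,u) = ℓ_μ(x,u) − ℓ_μ(xᵉ_μ,uᵉ_μ) + λ_μ(x) − λ_μ(f(x,u)). Then ∇ₓλ_μ(xᵉ_μ) = ν_μ and the gradient of ℓ̃_μ with respect to (x,u) vanishes at (xᵉ_μ,uᵉ_μ):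 ∇_{(x,u)}ℓ̃_μ(xᵉ_μ,uᵉ_μ) = 0. -/
open Set Bornology Matrix Filter

/-!
Write `φ = λ_μ - ν_μᵀ(·)`. By the choice of `λ̃_μ` the derivative of `λ_μ` at `xᵉ_μ` is `ν_μᵀ`, so
`φ` is stationary at `xᵉ_μ`. Since `f(xᵉ_μ,uᵉ_μ) = xᵉ_μ`, the rotated cost differs from the
Lagrangian `ℓ_μ(x,u) + ν_μᵀ(x - f(x,u))` by `φ(x) - φ(f(x,u))` plus a constant, which is
stationary at `(xᵉ_μ,uᵉ_μ)`; hence both have the same derivative there, namely `0`.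
-/

section

variable {𝕜 E F : Type*} [NontriviallyNormedField 𝕜] [NormedAddCommGroup E] [NormedSpace 𝕜 E]
  [NormedAddCommGroup F] [NormedSpace 𝕜 F]

theorem fderiv_add_of_hasFDerivAt_zero {φ ψ : E → F} {x : E}
    (hψ : HasFDerivAt ψ (0 : E →L[𝕜] F) x) :
    fderiv 𝕜 (fun y => φ y + ψ y) x = fderiv 𝕜 φ x := by
  by_cases hφ : DifferentiableAt 𝕜 φ x
  · rw [fderiv_fun_add hφ hψ.differentiableAt, hψ.fderiv, add_zero]
  · rw [fderiv_zero_of_not_differentiableAt hφ, fderiv_zero_of_not_differentiableAt]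
    rwa [hψ.differentiableAt.fun_add_iff_left]

end

section

variable {𝕜 X U : Type*} [NontriviallyNormedField 𝕜] [NormedAddCommGroup X] [NormedSpace 𝕜 X]
  [NormedAddCommGroup U] [NormedSpace 𝕜 U]

theorem fderiv_rotatedCost_eq_fderiv_lagrangian (ℓ : X × U → 𝕜) (f : X × U → X) (lam : X → 𝕜)
    (ν : X →L[𝕜] 𝕜) (c : 𝕜) {xe : X} {ue : U} (heq : f (xe, ue) = xe)
    (hf : DifferentiableAt 𝕜 f (xe, ue)) (hlam : HasFDerivAt lam ν xe) :
    fderiv 𝕜 (fun z => ℓ z - c + lam z.1 - lam (f z)) (xe, ue) =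
      fderiv 𝕜 (fun z => ℓ z + ν (z.1 - f z)) (xe, ue) := by
  have hφ : HasFDerivAt (fun x => lam x - ν x) (0 : X →L[𝕜] 𝕜) xe := by
    simpa using hlam.fun_sub ν.hasFDerivAt
  have hψ : HasFDerivAt (fun z : X × U => (lam z.1 - ν z.1) - (lam (f z) - ν (f z)) - c)
      (0 : X × U →L[𝕜] 𝕜) (xe, ue) := by
    have h_fst := hφ.comp (xe, ue) (hasFDerivAt_fst (𝕜 := 𝕜) (p := (xe, ue)))
    have h_f := (heq ▸ hφ).comp (xe, ue) hf.hasFDerivAt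
    simpa using (h_fst.sub h_f).sub_const c
  refine Eq.trans ?_ (fderiv_add_of_hasFDerivAt_zero hψ)
  congr 1
  ext z
  simp only [map_sub]
  ring

end

section

variable {ι : Type*} [Fintype ι]

noncomputable def dotProductCLM : (ι → ℝ) →ₗ[ℝ] (ι → ℝ) →L[ℝ] ℝ :=
  LinearMap.toContinuousLinearMap.toLinearMap ∘ₗ dotProductBilin ℝ ℝ

@[simp]
theorem dotProductCLM_apply (a v : ι → ℝ) : dotProductCLM a v = a ⬝ᵥ v :=
  rfl

theorem DifferentiableAt.hasFDerivAt_dotProductCLM {φ : (ι → ℝ) → ℝ} {x g : ι → ℝ}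
    (hφ : DifferentiableAt ℝ φ x) (hg : ∀ v, fderiv ℝ φ x v = g ⬝ᵥ v) :
    HasFDerivAt φ (dotProductCLM g) x := by
  convert hφ.hasFDerivAt
  ext v
  exact (hg v).symm

end

theorem stmt14_general {n m : ℕ} (f : Vec n × Vec m → Vec n) (hf : ContDiff ℝ 1 f)
    (lam₁ lam₂ : Vec n → ℝ) (hlam₁ : ContDiff ℝ 1 lam₁) (hlam₂ : ContDiff ℝ 1 lam₂)
    (μ : ℝ)
    (ℓμ : Vec n × Vec m → ℝ)
    (xeμ : Vec n) (ueμ : Vec m) (heq : f (xeμ, ueμ) = xeμ)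
    (νμ : Vec n)
    (hKKT : fderiv ℝ (fun z : Vec n × Vec m => ℓμ z + νμ ⬝ᵥ (z.1 - f z)) (xeμ, ueμ) = 0)
    (grad₁ grad₂ : Vec n → Vec n)
    (hgrad₁ : ∀ x v, fderiv ℝ lam₁ x v = grad₁ x ⬝ᵥ v)
    (hgrad₂ : ∀ x v, fderiv ℝ lam₂ x v = grad₂ x ⬝ᵥ v)
    (tlamμ : Vec n) (htlam : tlamμ = νμ - μ • grad₁ xeμ - (1 - μ) • grad₂ xeμ)
    (lamμ : Vec n → ℝ)
    (hlamμ : lamμ = fun x => μ * lam₁ x + (1 - μ) * lam₂ x + tlamμ ⬝ᵥ x)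
    (ltμ : Vec n × Vec m → ℝ)
    (hltμ : ltμ = fun z => ℓμ z - ℓμ (xeμ, ueμ) + lamμ z.1 - lamμ (f z)) :
    (∀ v : Vec n, fderiv ℝ lamμ xeμ v = νμ ⬝ᵥ v) ∧
      fderiv ℝ ltμ (xeμ, ueμ) = 0 := by
  have h₁ := (hlam₁.differentiable one_ne_zero xeμ).hasFDerivAt_dotProductCLM (hgrad₁ xeμ)
  have h₂ := (hlam₂.differentiable one_ne_zero xeμ).hasFDerivAt_dotProductCLM (hgrad₂ xeμ)
  have hν : νμ = μ • grad₁ xeμ + (1 - μ) • grad₂ xeμ + tlamμ := by rw [htlam]; abel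
  have hlam : HasFDerivAt lamμ (dotProductCLM νμ) xeμ := by
    rw [hlamμ, hν, map_add, map_add, map_smul, map_smul]
    exact ((h₁.const_mul μ).add (h₂.const_mul (1 - μ))).add (dotProductCLM tlamμ).hasFDerivAt
  refine ⟨fun v => by rw [hlam.fderiv, dotProductCLM_apply], ?_⟩
  rw [hltμ, fderiv_rotatedCost_eq_fderiv_lagrangian ℓμ f lamμ _ _ heq
    (hf.differentiable one_ne_zero _) hlam]
  exact hKKT

/-- first part of the proof of Theorem 4.6: with the storage function
`λ_μ(x) = μλ₁(x) + (1-μ)λ₂(x) + λ̃_μᵀx`, where `λ̃_μ = ν_μ - μ∇λ₁(xᵉ_μ) - (1-μ)∇λ₂(xᵉ_μ)`,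
one has `∇λ_μ(xᵉ_μ) = ν_μ` and the gradient of the rotated cost `ℓ̃_μ` vanishes at
`(xᵉ_μ,uᵉ_μ)`. -/
theorem stmt14 {n m : ℕ} (f : Vec n × Vec m → Vec n) (hf : ContDiff ℝ 1 f)
    (ℓ₁ ℓ₂ : Vec n × Vec m → ℝ) (hℓ₁ : ContDiff ℝ 1 ℓ₁) (hℓ₂ : ContDiff ℝ 1 ℓ₂)
    (lam₁ lam₂ : Vec n → ℝ) (hlam₁ : ContDiff ℝ 1 lam₁) (hlam₂ : ContDiff ℝ 1 lam₂)
    (μ : ℝ) (hμ : μ ∈ Icc (0 : ℝ) 1)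
    (ℓμ : Vec n × Vec m → ℝ) (hℓμ : ℓμ = fun z => μ * ℓ₁ z + (1 - μ) * ℓ₂ z)
    (xeμ : Vec n) (ueμ : Vec m) (heq : f (xeμ, ueμ) = xeμ)
    (νμ : Vec n)
    (hKKT : fderiv ℝ (fun z : Vec n × Vec m => ℓμ z + νμ ⬝ᵥ (z.1 - f z)) (xeμ, ueμ) = 0)
    (grad₁ grad₂ : Vec n → Vec n)
    (hgrad₁ : ∀ x v, fderiv ℝ lam₁ x v = grad₁ x ⬝ᵥ v)
    (hgrad₂ : ∀ x v, fderiv ℝ lam₂ x v = grad₂ x ⬝ᵥ v)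
    (tlamμ : Vec n) (htlam : tlamμ = νμ - μ • grad₁ xeμ - (1 - μ) • grad₂ xeμ)
    (lamμ : Vec n → ℝ)
    (hlamμ : lamμ = fun x => μ * lam₁ x + (1 - μ) * lam₂ x + tlamμ ⬝ᵥ x)
    (ltμ : Vec n × Vec m → ℝ)
    (hltμ : ltμ = fun z => ℓμ z - ℓμ (xeμ, ueμ) + lamμ z.1 - lamμ (f z)) :
    (∀ v : Vec n, fderiv ℝ lamμ xeμ v = νμ ⬝ᵥ v) ∧
      fderiv ℝ ltμ (xeμ, ueμ) = 0 :=
  stmt14_general f hf lam₁ lam₂ hlam₁ hlam₂ μ ℓμ xeμ ueμ heq νμ hKKT grad₁ grad₂ hgrad₁ hgrad₂ tlamμ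
    htlam lamμ hlamμ ltμ hltμ
end

section
/- Let g : ℝᵏ → ℝ be continuous and strictly convex with g(z*) = 0 for some z* ∈ ℝᵏ and g(z) > 0 for all z ≠ z*. Then g is radially unbounded (g(z) → ∞ as ‖z‖ → ∞) and there exists a class-K∞ function α such that g(z) ≥ α(‖z − z*‖) for all z ∈ ℝᵏ. -/
/-!
Convexity makes `g` grow at least linearly along every ray from `z*`: if `g ≥ m` on the sphere of
radius `r` about `z*`, then `g z ≥ (‖z - z*‖ / r) m` outside it, and by compactness and
positivity such an `m > 0` exists for every `r > 0`. With `r = 1` this is radial unboundedness;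
for general `r` it shows that the lower envelope `ψ r = inf {g z | r ≤ ‖z - z*‖}` is monotone,
positive for `r > 0` and unbounded. Its average `α r = (∫₀ʳ ψ) / (1 + r)` is then continuous,
strictly increasing and below `ψ`, hence a `K∞` lower bound for `g`.
-/

open Set

open Metric intervalIntegral

section Monotone

variable {ψ : ℝ → ℝ}

theorem Monotone.mul_le_intervalIntegral (hψ : Monotone ψ) {a b : ℝ} (hab : a ≤ b) :
    (b - a) * ψ a ≤ ∫ t in a..b, ψ t := by
  simpa [mul_comm] using
    integral_mono_on (μ := MeasureTheory.volume) hab intervalIntegrable_const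
      hψ.intervalIntegrable fun t ht => hψ ht.1

theorem Monotone.intervalIntegral_le_mul (hψ : Monotone ψ) {a b : ℝ} (hab : a ≤ b) :
    ∫ t in a..b, ψ t ≤ (b - a) * ψ b := by
  simpa [mul_comm] using
    integral_mono_on (μ := MeasureTheory.volume) hab hψ.intervalIntegrable
      intervalIntegrable_const fun t ht => hψ ht.2

theorem Monotone.exists_kInf_le (hψ : Monotone ψ) (h0 : 0 ≤ ψ 0)
    (hpos : ∀ r, 0 < r → 0 < ψ r) (hunbdd : ∀ M, ∃ r, M ≤ ψ r) :
    ∃ α : ℝ → ℝ, KInf α ∧ ∀ r, 0 ≤ r → α r ≤ ψ r := by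
  set Φ : ℝ → ℝ := fun r => ∫ t in (0 : ℝ)..r, ψ t with hΦ
  have hincr : ∀ r s, r ≤ s → (s - r) * ψ r ≤ Φ s - Φ r := fun r s hrs => by
    rw [hΦ, integral_interval_sub_left hψ.intervalIntegrable hψ.intervalIntegrable]
    exact hψ.mul_le_intervalIntegral hrs
  have hΦ_le : ∀ r, 0 ≤ r → Φ r ≤ r * ψ r := fun r hr => by
    simpa using hψ.intervalIntegral_le_mul hr
  have hΦ_nonneg : ∀ r, 0 ≤ r → 0 ≤ Φ r := fun r hr => by
    simpa using (mul_nonneg hr h0).trans (by simpa using hψ.mul_le_intervalIntegral hr)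
  have hcross : ∀ r s, 0 ≤ r → r ≤ s → (s - r) * ψ r ≤ Φ s * (1 + r) - Φ r * (1 + s) :=
    fun r s hr hrs => by nlinarith [hincr r s hrs, hΦ_le r hr]
  refine ⟨fun r => Φ r / (1 + r), ⟨?cont, ?mono, by simp [hΦ], ?nonneg, ?unbdd⟩, ?le⟩
  case cont =>
    exact ((continuous_primitive (fun _ _ => hψ.intervalIntegrable) 0).continuousOn).div
      (by fun_prop) fun r (hr : 0 ≤ r) => by positivity
  case mono =>
    intro r (hr : 0 ≤ r) s _ hrs
    have hp : 0 < (r + s) / 2 := by linarith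
    -- pass through the midpoint, where `ψ` is positive even if `r = 0`
    calc Φ r / (1 + r) ≤ Φ ((r + s) / 2) / (1 + (r + s) / 2) := by
          rw [div_le_div_iff₀ (by linarith) (by linarith)]
          linarith [hcross r ((r + s) / 2) hr (by linarith),
            mul_nonneg (by linarith : 0 ≤ (r + s) / 2 - r) (h0.trans (hψ hr))]
      _ < Φ s / (1 + s) := by
          rw [div_lt_div_iff₀ (by linarith) (by linarith)]
          linarith [hcross ((r + s) / 2) s hp.le (by linarith),
            mul_pos (by linarith : 0 < s - (r + s) / 2) (hpos _ hp)]
  case nonneg => exact fun r (hr : 0 ≤ r) => div_nonneg (hΦ_nonneg r hr) (by positivity)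
  case unbdd =>
    intro M
    obtain ⟨r₀, hr₀⟩ := hunbdd (3 * M + 3)
    set r := max r₀ 1
    have hr : 1 ≤ r := le_max_right _ _
    have hψr : 3 * M + 3 ≤ ψ r := hr₀.trans (hψ (le_max_left _ _))
    refine ⟨2 * r, by simp only [mem_Ici]; linarith, ?_⟩
    -- `Φ (2r) ≥ r ψ r` and `1 + 2r ≤ 3r`, so `α (2r) ≥ ψ r / 3 > M`
    have h1 := hincr r (2 * r) (by linarith)
    have h2 := hΦ_nonneg r (by linarith)
    have h3 := hpos r (by linarith)
    rw [lt_div_iff₀ (by linarith)]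
    nlinarith
  case le =>
    intro r hr
    rw [div_le_iff₀ (by linarith)]
    nlinarith [hΦ_le r hr, h0.trans (hψ hr)]

end Monotone

section Metric

variable {X : Type*} [MetricSpace X] [ProperSpace X]

theorem exists_pos_forall_sphere_le {g : X → ℝ} {x₀ : X} (hg : Continuous g)
    (hpos : ∀ z, z ≠ x₀ → 0 < g z) {r : ℝ} (hr : 0 < r) :
    ∃ m, 0 < m ∧ ∀ y ∈ sphere x₀ r, m ≤ g y :=
  (isCompact_sphere x₀ r).exists_forall_le' hg.continuousOn fun y hy =>
    hpos y (ne_of_mem_sphere hy hr.ne')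

end Metric

section Convex

variable {E : Type*} [NormedAddCommGroup E] [NormedSpace ℝ E] {g : E → ℝ} {x₀ : E}

theorem ConvexOn.norm_sub_div_mul_le (hg : ConvexOn ℝ univ g) (h0 : g x₀ = 0) {r m : ℝ}
    (hr : 0 < r) (hm : ∀ y ∈ sphere x₀ r, m ≤ g y) {z : E} (hz : r ≤ ‖z - x₀‖) :
    ‖z - x₀‖ / r * m ≤ g z := by
  set s := ‖z - x₀‖
  have hs : 0 < s := hr.trans_le hz
  have hy : x₀ + (r / s) • (z - x₀) ∈ sphere x₀ r := by
    rw [mem_sphere_iff_norm, add_sub_cancel_left, norm_smul, Real.norm_of_nonneg (by positivity),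
      div_mul_cancel₀ _ hs.ne']
  have hconv : g (x₀ + (r / s) • (z - x₀)) ≤ (1 - r / s) * g x₀ + r / s * g z := by
    have := hg.2 (mem_univ x₀) (mem_univ z) (sub_nonneg.2 ((div_le_one hs).2 hz))
      (by positivity : 0 ≤ r / s) (sub_add_cancel 1 (r / s))
    rwa [show (1 - r / s) • x₀ + (r / s) • z = x₀ + (r / s) • (z - x₀) by module] at this
  have := (hm _ hy).trans hconv
  rw [h0, mul_zero, zero_add] at this
  calc s / r * m ≤ s / r * (r / s * g z) := by gcongr
    _ = g z := by field_simp

variable [ProperSpace E]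

theorem exists_pos_forall_le_norm_sub (hconv : ConvexOn ℝ univ g) (hg : Continuous g)
    (h0 : g x₀ = 0) (hpos : ∀ z, z ≠ x₀ → 0 < g z) {r : ℝ} (hr : 0 < r) :
    ∃ m, 0 < m ∧ ∀ z, r ≤ ‖z - x₀‖ → m ≤ g z := by
  obtain ⟨m, hm, hsph⟩ := exists_pos_forall_sphere_le hg hpos hr
  refine ⟨m, hm, fun z hz => le_trans ?_ (hconv.norm_sub_div_mul_le h0 hr hsph hz)⟩
  exact le_mul_of_one_le_left hm.le ((one_le_div hr).2 hz)

theorem exists_forall_le_norm_sub (hconv : ConvexOn ℝ univ g) (hg : Continuous g)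
    (h0 : g x₀ = 0) (hpos : ∀ z, z ≠ x₀ → 0 < g z) (M : ℝ) :
    ∃ R, ∀ z, R ≤ ‖z - x₀‖ → M ≤ g z := by
  obtain ⟨m, hm, hsph⟩ := exists_pos_forall_sphere_le hg hpos one_pos
  refine ⟨max 1 (M / m), fun z hz => le_trans ?_ (hconv.norm_sub_div_mul_le h0 one_pos hsph
    ((le_max_left _ _).trans hz))⟩
  rw [div_one, ← div_le_iff₀ hm]
  exact (le_max_right _ _).trans hz

end Convex

section LowerEnvelope

variable {E : Type*} [NormedAddCommGroup E] {g : E → ℝ} {x₀ : E}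

noncomputable def lowerEnvelope (g : E → ℝ) (x₀ : E) (r : ℝ) : ℝ :=
  sInf (g '' {z | r ≤ ‖z - x₀‖})

theorem lowerEnvelope_le (hg : ∀ z, 0 ≤ g z) (z : E) : lowerEnvelope g x₀ ‖z - x₀‖ ≤ g z :=
  csInf_le ⟨0, forall_mem_image.2 fun z _ => hg z⟩ ⟨z, le_refl ‖z - x₀‖, rfl⟩

variable [NormedSpace ℝ E] [Nontrivial E]

theorem nonempty_setOf_le_norm_sub (x₀ : E) (r : ℝ) : {z : E | r ≤ ‖z - x₀‖}.Nonempty :=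
  let ⟨v, hv⟩ := NormedSpace.exists_lt_norm ℝ E r
  ⟨x₀ + v, by simpa using hv.le⟩

theorem le_lowerEnvelope {b r : ℝ} (h : ∀ z, r ≤ ‖z - x₀‖ → b ≤ g z) :
    b ≤ lowerEnvelope g x₀ r :=
  le_csInf ((nonempty_setOf_le_norm_sub x₀ r).image g) (forall_mem_image.2 h)

theorem lowerEnvelope_monotone (hg : ∀ z, 0 ≤ g z) : Monotone (lowerEnvelope g x₀) :=
  fun _ s hrs => csInf_le_csInf ⟨0, forall_mem_image.2 fun z _ => hg z⟩
    ((nonempty_setOf_le_norm_sub x₀ s).image g) (image_mono fun _ hz => hrs.trans hz)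

end LowerEnvelope

/-- used in the proof of Theorem 4.10, cf. [Baker2016] and
[Khalil, Lemma 4.3]: a continuous, strictly convex, positive definite function is radially
unbounded and admits a class-`K∞` lower bound. -/
theorem stmt17 {k : ℕ} (g : (Fin k → ℝ) → ℝ) (hg : Continuous g)
    (hconv : StrictConvexOn ℝ univ g)
    (zstar : Fin k → ℝ) (hz : g zstar = 0)
    (hpos : ∀ z : Fin k → ℝ, z ≠ zstar → 0 < g z) :
    (∀ M : ℝ, ∃ R : ℝ, ∀ z : Fin k → ℝ, R ≤ ‖z‖ → M ≤ g z) ∧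
      ∃ α : ℝ → ℝ, KInf α ∧ ∀ z : Fin k → ℝ, α ‖z - zstar‖ ≤ g z := by
  have hconvex := hconv.convexOn
  have hnonneg (z : Fin k → ℝ) : 0 ≤ g z := by
    rcases eq_or_ne z zstar with rfl | hne
    exacts [hz.ge, (hpos z hne).le]
  refine ⟨fun M => ?_, ?_⟩
  · obtain ⟨R, hR⟩ := exists_forall_le_norm_sub hconvex hg hz hpos M
    exact ⟨R + ‖zstar‖, fun z hzR => hR z (by linarith [norm_sub_norm_le z zstar])⟩
  -- for `k = 0` the envelope is `sInf ∅ = 0`, so `ψ = id` is used instead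
  rcases subsingleton_or_nontrivial (Fin k → ℝ) with hE | hE
  · obtain ⟨α, hα, -⟩ := monotone_id.exists_kInf_le le_rfl (fun _ hr => hr) fun M => ⟨M, le_rfl⟩
    refine ⟨α, hα, fun z => ?_⟩
    rw [Subsingleton.elim z zstar, sub_self, norm_zero, hα.2.2.1, hz]
  have hψpos (r : ℝ) (hr : 0 < r) : 0 < lowerEnvelope g zstar r := by
    obtain ⟨m, hm, hmle⟩ := exists_pos_forall_le_norm_sub hconvex hg hz hpos hr
    exact hm.trans_le (le_lowerEnvelope hmle)
  have hψunbdd (M : ℝ) : ∃ r, M ≤ lowerEnvelope g zstar r := by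
    obtain ⟨R, hR⟩ := exists_forall_le_norm_sub hconvex hg hz hpos M
    exact ⟨R, le_lowerEnvelope (hR ·)⟩
  obtain ⟨α, hα, hle⟩ := (lowerEnvelope_monotone hnonneg).exists_kInf_le
    (le_lowerEnvelope fun z _ => hnonneg z) hψpos hψunbdd
  exact ⟨α, hα, fun z => (hle _ (norm_nonneg _)).trans (lowerEnvelope_le hnonneg z)⟩
end
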